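/- arXiv:2003.02238 — 5 statements merged into one kernel-verified Lean document; each statement's English description precedes it below -/
import Mathlib

section
/- For any countable group G and any reasonable pointclass Γ, (Γ, E_G)-determinacy implies Γ-determinacy; that is, if every E_G-invariant set A ⊆ S^G in Γ (for S = 2 or S = ω) has determined preimage π⁻¹(A) under every enumeration-induced homeomorphism π : S^ω → S^G, then every set in Γ of sequences is determined. -/
open Filter Set

/-- The position (list of moves) consisting of the first `n` moves of the run `x`. -/
def initSeg {S : Type*} (x : ℕ → S) (n : ℕ) : List S := List.ofFn (fun i : Fin n => x i)

/-- The run `x` is compatible with player I using strategy `σ`. -/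
def FollowsStratI {S : Type*} (σ : List S → S) (x : ℕ → S) : Prop :=
  ∀ n, x (2 * n) = σ (initSeg x (2 * n))

/-- The run `x` is compatible with player II using strategy `τ`. -/
def FollowsStratII {S : Type*} (τ : List S → S) (x : ℕ → S) : Prop :=
  ∀ n, x (2 * n + 1) = τ (initSeg x (2 * n + 1))

/-- The game with payoff set `A` (for player I) is determined. -/
def GameDetermined {S : Type*} (A : Set (ℕ → S)) : Prop :=
  (∃ σ : List S → S, ∀ x, FollowsStratI σ x → x ∈ A) ∨
  (∃ τ : List S → S, ∀ x, FollowsStratII τ x → x ∉ A)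

/-- A pointclass: a collection of subsets of topological (in particular Polish) spaces closed
under continuous preimages. -/
structure Pointclass : Type 1 where
  mem : ∀ (X : Type) [TopologicalSpace X], Set (Set X)
  continuous_preimage : ∀ (X Y : Type) [TopologicalSpace X] [TopologicalSpace Y]
    (f : X → Y), Continuous f → ∀ A : Set Y, A ∈ mem Y → f ⁻¹' A ∈ mem X

/-- `sigmaLevel X n` is the pointclass `Σ⁰_{n+1}` of subsets of `X`. -/
def sigmaLevel (X : Type) [TopologicalSpace X] : ℕ → Set (Set X)
  | 0 => {s | IsOpen s}
  | (n + 1) => {s | ∃ f : ℕ → Set X, (∀ k, (f k)ᶜ ∈ sigmaLevel X n) ∧ s = ⋃ k, f k}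

/-- `Δ⁰₆` sets: both `Σ⁰₆` and `Π⁰₆`. -/
def IsDelta06 {X : Type} [TopologicalSpace X] (s : Set X) : Prop :=
  s ∈ sigmaLevel X 5 ∧ sᶜ ∈ sigmaLevel X 5

/-- A function is `Δ⁰₆`-measurable if preimages of open sets are `Δ⁰₆`. -/
def Delta06Measurable {X Y : Type} [TopologicalSpace X] [TopologicalSpace Y] (f : X → Y) : Prop :=
  ∀ U : Set Y, IsOpen U → IsDelta06 (f ⁻¹' U)

/-- A reasonable pointclass: closed under unions and intersections with `Δ⁰₆` sets and under
substitution by `Δ⁰₆`-measurable functions. -/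
structure Reasonable (Γ : Pointclass) : Prop where
  union_delta : ∀ (X : Type) [TopologicalSpace X] (A B : Set X),
    A ∈ Γ.mem X → IsDelta06 B → A ∪ B ∈ Γ.mem X
  inter_delta : ∀ (X : Type) [TopologicalSpace X] (A B : Set X),
    A ∈ Γ.mem X → IsDelta06 B → A ∩ B ∈ Γ.mem X
  delta_subst : ∀ (X Y : Type) [TopologicalSpace X] [TopologicalSpace Y] (f : X → Y),
    Delta06Measurable f → ∀ A : Set Y, A ∈ Γ.mem Y → f ⁻¹' A ∈ Γ.mem X

/-- `Γ`-determinacy for games with moves in `S`: every `Γ` subset of `S^ω` is determined. -/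
def GammaDetOn (Γ : Pointclass) (S : Type) [TopologicalSpace S] : Prop :=
  ∀ A : Set (ℕ → S), A ∈ Γ.mem (ℕ → S) → GameDetermined A

/-- The orbit equivalence relation of the left shift action of `G` on `S^G`:
`y = g · x` where `(g · x)(h) = x (g⁻¹ h)`. -/
def ShiftRel (G : Type*) {S : Type*} [Group G] (x y : G → S) : Prop :=
  ∃ g : G, ∀ h : G, y h = x (g⁻¹ * h)

/-- `(Γ, E_G)`-determinacy for the shift action of `G` on `S^G`: every `E_G`-invariant `Γ`
subset of `S^G` has determined preimage under the homeomorphism `S^ω ≃ S^G` induced by any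
enumeration `π` of `G`. -/
def GammaShiftDet (Γ : Pointclass) (G : Type) [Group G] (S : Type) [TopologicalSpace S] : Prop :=
  ∀ A : Set (G → S), A ∈ Γ.mem (G → S) →
    (∀ x y : G → S, ShiftRel G x y → (x ∈ A ↔ y ∈ A)) →
    ∀ π : ℕ ≃ G, GameDetermined {x : ℕ → S | (fun g => x (π.symm g)) ∈ A}

/-!
Enumerate `G` as `π : ℕ ≃ G` in blocks of eight positions: `8i, 8i+2, 8i+4` are marker moves of
player I with prescribed values `s0, s1, s0`, `8i+1, 8i+3, 8i+5` are junk moves of player II, and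
`8i+6, 8i+7` carry the moves of a run of the original game. Built greedily, the blocks can be
chosen so that every `g ≠ 1` satisfies `π (8i+2) = g * π (8i)` and `π (8i+4) = g * π (8i+1)` for
some `i`. Then a marked `y` is the only marked point of its orbit, and if II's junk moves in `y`
are `s1`, no `g • y` with `g ≠ 1` is marked. Decoding the marked translate of a point gives a
`Δ⁰₆`-measurable map, so `A` pulls back to a shift-invariant set in `Γ`. A winning strategy in
the game on that set is transferred to the game on `A` by simulating it, with player I's markers
or player II's junk moves filled in.
-/

open Function

section BorelHierarchy

variable {X : Type} [TopologicalSpace X] {n : ℕ} {s t : Set X}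

theorem compl_mem_sigmaLevel_succ (hs : s ∈ sigmaLevel X n) : sᶜ ∈ sigmaLevel X (n + 1) :=
  ⟨fun _ => sᶜ, fun _ => by rwa [compl_compl], (iUnion_const _).symm⟩

theorem IsClosed.mem_sigmaLevel_one (hs : IsClosed s) : s ∈ sigmaLevel X 1 :=
  compl_compl s ▸ compl_mem_sigmaLevel_succ hs.isOpen_compl

theorem empty_mem_sigmaLevel_and_univ_mem (n : ℕ) :
    (∅ : Set X) ∈ sigmaLevel X n ∧ (univ : Set X) ∈ sigmaLevel X n := by
  induction n with
  | zero => exact ⟨isOpen_empty, isOpen_univ⟩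
  | succ n ih =>
    exact ⟨compl_univ (α := X) ▸ compl_mem_sigmaLevel_succ ih.2,
      compl_empty (α := X) ▸ compl_mem_sigmaLevel_succ ih.1⟩

theorem mem_sigmaLevel_succ_iff : s ∈ sigmaLevel X (n + 1) ↔
    ∃ T : Set (Set X), T.Countable ∧ (∀ t ∈ T, tᶜ ∈ sigmaLevel X n) ∧ s = ⋃₀ T := by
  constructor
  · rintro ⟨f, hf, rfl⟩
    exact ⟨range f, countable_range f, forall_mem_range.2 hf, (sUnion_range f).symm⟩
  · rintro ⟨T, hT, hTn, rfl⟩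
    rcases T.eq_empty_or_nonempty with rfl | hne
    · exact ⟨fun _ => ∅, fun _ => by simpa using (empty_mem_sigmaLevel_and_univ_mem n).2,
        by simp⟩
    · obtain ⟨f, rfl⟩ := hT.exists_eq_range hne
      exact ⟨f, fun k => hTn _ (mem_range_self k), sUnion_range f⟩

theorem iUnion_mem_sigmaLevel_succ {ι : Sort*} [Countable ι] {s : ι → Set X}
    (hs : ∀ i, s i ∈ sigmaLevel X (n + 1)) : ⋃ i, s i ∈ sigmaLevel X (n + 1) := by
  choose T hT hTn hsT using fun i => mem_sigmaLevel_succ_iff.1 (hs i)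
  refine mem_sigmaLevel_succ_iff.2 ⟨⋃ i, T i, countable_iUnion hT, ?_, ?_⟩
  · intro t ht
    obtain ⟨i, hi⟩ := mem_iUnion.1 ht
    exact hTn i t hi
  · simp only [hsT, sUnion_iUnion]

theorem union_mem_sigmaLevel : ∀ {n}, s ∈ sigmaLevel X n → t ∈ sigmaLevel X n →
    s ∪ t ∈ sigmaLevel X n
  | 0, hs, ht => IsOpen.union hs ht
  | _ + 1, hs, ht => union_eq_iUnion ▸ iUnion_mem_sigmaLevel_succ (Bool.forall_bool.2 ⟨ht, hs⟩)

theorem inter_mem_sigmaLevel : ∀ {n}, s ∈ sigmaLevel X n → t ∈ sigmaLevel X n →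
    s ∩ t ∈ sigmaLevel X n
  | 0, hs, ht => IsOpen.inter hs ht
  | _ + 1, ⟨f, hf, hfs⟩, ⟨g, hg, hgt⟩ => by
    rw [hfs, hgt, iUnion_inter_iUnion]
    exact iUnion_mem_sigmaLevel_succ fun k => iUnion_mem_sigmaLevel_succ fun l => by
      simpa only [compl_union, compl_compl] using
        compl_mem_sigmaLevel_succ (union_mem_sigmaLevel (hf k) (hg l))

variable [PerfectlyNormalSpace X]

theorem IsOpen.mem_sigmaLevel_one {U : Set X} (hU : IsOpen U) : U ∈ sigmaLevel X 1 := by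
  obtain ⟨T, hTo, hT, hUT⟩ := hU.isClosed_compl.isGδ
  refine mem_sigmaLevel_succ_iff.2 ⟨compl '' T, hT.image _, ?_, ?_⟩
  · rintro _ ⟨t, ht, rfl⟩
    rw [compl_compl]
    exact hTo t ht
  · rw [← compl_sInter, ← hUT, compl_compl]

theorem sigmaLevel_mono : Monotone (sigmaLevel X) := by
  refine monotone_nat_of_le_succ fun n => ?_
  induction n with
  | zero => exact fun U hU => IsOpen.mem_sigmaLevel_one hU
  | succ n ih =>
    rintro s ⟨f, hf, rfl⟩
    exact ⟨f, fun k => ih (hf k), rfl⟩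

theorem isDelta06_of_mem_sigmaLevel (hs : s ∈ sigmaLevel X n) (hn : n ≤ 4) : IsDelta06 s :=
  ⟨sigmaLevel_mono (by omega) hs, sigmaLevel_mono (by omega) (compl_mem_sigmaLevel_succ hs)⟩

theorem preimage_mem_sigmaLevel_of_piecewise {Y : Type} [TopologicalSpace Y] {ι : Type*}
    [Countable ι] {f : X → Y} {P : ι → Set X} {F : ι → X → Y}
    (hP : ∀ i, P i ∈ sigmaLevel X (n + 1)) (hF : ∀ i, Continuous (F i))
    (hcover : ∀ x, ∃ i, x ∈ P i) (hf : ∀ i, ∀ x ∈ P i, f x = F i x)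
    {U : Set Y} (hU : IsOpen U) : f ⁻¹' U ∈ sigmaLevel X (n + 1) := by
  have hpre : f ⁻¹' U = ⋃ i, P i ∩ F i ⁻¹' U := by
    ext x
    simp only [mem_preimage, mem_iUnion, mem_inter_iff]
    refine ⟨fun hx => ?_, fun ⟨i, hi, hx⟩ => hf i x hi ▸ hx⟩
    obtain ⟨i, hi⟩ := hcover x
    exact ⟨i, hi, hf i x hi ▸ hx⟩
  rw [hpre]
  exact iUnion_mem_sigmaLevel_succ fun i =>
    inter_mem_sigmaLevel (hP i) (sigmaLevel_mono (Nat.zero_le _) ((hU.preimage (hF i))))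

end BorelHierarchy

section Games

variable {S : Type*}

theorem initSeg_succ (x : ℕ → S) (n : ℕ) : initSeg x (n + 1) = initSeg x n ++ [x n] := by
  rw [initSeg, initSeg, List.ofFn_succ', List.concat_eq_append]
  rfl

theorem length_initSeg (x : ℕ → S) (n : ℕ) : (initSeg x n).length = n := by
  simp [initSeg]

theorem getD_initSeg (x : ℕ → S) {i n : ℕ} (h : i < n) (d : S) : (initSeg x n).getD i d = x i := by
  simp [initSeg, h]

theorem initSeg_congr {x y : ℕ → S} {n : ℕ} (h : ∀ i < n, x i = y i) :
    initSeg x n = initSeg y n :=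
  List.ofFn_inj.2 (funext fun i => h i i.2)

def playHist (f : ℕ → List S → S) : ℕ → List S
  | 0 => []
  | n + 1 => playHist f n ++ [f n (playHist f n)]

def play (f : ℕ → List S → S) (n : ℕ) : S := f n (playHist f n)

theorem initSeg_play (f : ℕ → List S → S) (n : ℕ) : initSeg (play f) n = playHist f n := by
  induction n with
  | zero => rfl
  | succ n ih => rw [initSeg_succ, ih, playHist, play]

theorem play_apply (f : ℕ → List S → S) (n : ℕ) : play f n = f n (initSeg (play f) n) := by
  rw [initSeg_play, play]

theorem play_congr {f f' : ℕ → List S → S} {N : ℕ} (h : ∀ n < N, f n = f' n) :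
    ∀ n < N, play f n = play f' n := by
  intro n
  induction n using Nat.strong_induction_on with
  | _ n ih =>
    intro hn
    rw [play_apply, play_apply f', h n hn, initSeg_congr fun i hi => ih i hi (hi.trans hn)]

def FollowsOn (Q : Set ℕ) (σ : List S → S) (x : ℕ → S) : Prop :=
  ∀ n ∈ Q, x n = σ (initSeg x n)

theorem followsStratI_iff {σ : List S → S} {x : ℕ → S} :
    FollowsStratI σ x ↔ FollowsOn {n | Even n} σ x := by
  refine ⟨fun h n hn => ?_, fun h n => h (2 * n) (even_two_mul n)⟩
  obtain ⟨k, rfl⟩ := even_iff_two_dvd.1 hn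
  exact h k

theorem followsStratII_iff {τ : List S → S} {x : ℕ → S} :
    FollowsStratII τ x ↔ FollowsOn {n | Odd n} τ x := by
  refine ⟨fun h n hn => ?_, fun h n => h (2 * n + 1) (odd_two_mul_add_one n)⟩
  obtain ⟨k, rfl⟩ := hn
  exact h k

/-- `Q` is the set of positions of the player using `σ` in the larger game. -/
theorem exists_strategy_of_strictMono {p : ℕ → ℕ} (hp : StrictMono p) (Q : Set ℕ)
    (σ : List S → S) (c : ℕ → S) :
    ∃ σ' : List S → S, ∀ x, FollowsOn (p ⁻¹' Q) σ' x →
      ∃ w, FollowsOn Q σ w ∧ w ∘ p = x ∧ ∀ n ∉ Q, n ∉ range p → w n = c n := by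
  classical
  let move (x : ℕ → S) (n : ℕ) (l : List S) : S :=
    if n ∈ Q then σ l else if n ∈ range p then x (invFun p n) else c n
  let extend (l : List S) (i : ℕ) : S := l.getD i (c 0)
  have hinv : LeftInverse (invFun p) p := leftInverse_invFun hp.injective
  have hpast : ∀ x m, initSeg (play (move (extend (initSeg x m)))) (p m) =
      initSeg (play (move x)) (p m) := by
    refine fun x m => initSeg_congr (play_congr fun n hn => funext fun l => ?_)
    simp only [move]
    split_ifs with hQ hr
    · rfl
    · obtain ⟨k, rfl⟩ := hr
      rw [hinv k]
      exact getD_initSeg x (hp.lt_iff_lt.1 hn) _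
    · rfl
  refine ⟨fun l => σ (initSeg (play (move (extend l))) (p l.length)), fun x hx =>
    ⟨play (move x), fun n hn => by rw [play_apply]; exact if_pos hn, funext fun m => ?_,
      fun n hQ hr => by rw [play_apply]; simp only [move, if_neg hQ, if_neg hr]⟩⟩
  by_cases hQ : p m ∈ Q
  · rw [comp_apply, play_apply, hx m hQ]
    beta_reduce
    rw [length_initSeg, hpast]
    exact if_pos hQ
  · rw [comp_apply, play_apply]
    simp only [move, if_neg hQ, if_pos (mem_range_self m), hinv m]

/-- A winning strategy for `B` is simulated in the game on `A`, the opponent's moves at the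
positions outside `range p` being `cI` or `cII`. -/
theorem GameDetermined.of_strictMono {A B : Set (ℕ → S)} {p : ℕ → ℕ} (hp : StrictMono p)
    (hpar : ∀ n, Even (p n) ↔ Even n) (cI cII : ℕ → S)
    (hI : ∀ w ∈ B, (∀ n, Odd n → n ∉ range p → w n = cII n) → w ∘ p ∈ A)
    (hII : ∀ w ∉ B, (∀ n, Even n → n ∉ range p → w n = cI n) → w ∘ p ∉ A)
    (hB : GameDetermined B) : GameDetermined A := by
  have hodd : ∀ n, Odd (p n) ↔ Odd n := fun n => by
    simp only [← Nat.not_even_iff_odd, hpar]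
  rcases hB with ⟨σ, hσ⟩ | ⟨τ, hτ⟩
  · obtain ⟨σ', hσ'⟩ := exists_strategy_of_strictMono hp {n | Even n} σ cII
    refine Or.inl ⟨σ', fun x hx => ?_⟩
    obtain ⟨w, hw, rfl, hc⟩ := hσ' x fun n hn => followsStratI_iff.1 hx n ((hpar n).1 hn)
    exact hI w (hσ w (followsStratI_iff.2 hw)) fun n hn =>
      hc n (Nat.not_even_iff_odd.2 hn)
  · obtain ⟨τ', hτ'⟩ := exists_strategy_of_strictMono hp {n | Odd n} τ cI
    refine Or.inr ⟨τ', fun x hx => ?_⟩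
    obtain ⟨w, hw, rfl, hc⟩ := hτ' x fun n hn => followsStratII_iff.1 hx n ((hodd n).1 hn)
    exact hII w (hτ w (followsStratII_iff.2 hw)) fun n hn =>
      hc n (Nat.not_odd_iff_even.2 hn)

end Games

section BlockEnumeration

/-- Greedily choosing, for `i = 0, 1, 2, …`, a block of fresh elements satisfying `P i` and
containing the `i`-th element of an enumeration of `α` (unless it is already used) exhausts `α`. -/
theorem exists_equiv_prod_of_exists_block {α ι : Type*} [Countable α] [Nonempty α] [Fintype ι]
    (P : ℕ → (ι → α) → Prop)
    (hP : ∀ i (s : Finset α) (x : α), ∃ b : ι → α, Injective b ∧ (∀ r, b r ∉ s) ∧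
      (x ∈ s ∨ x ∈ range b) ∧ P i b) :
    ∃ η : ℕ × ι ≃ α, ∀ i, P i fun r => η (i, r) := by
  classical
  obtain ⟨e, he⟩ := exists_surjective_nat α
  choose blk hinj hfresh hcover hblk using hP
  let used : ℕ → Finset α := fun n =>
    Nat.rec ∅ (fun i u => u ∪ Finset.univ.image (blk i u (e i))) n
  let η (q : ℕ × ι) : α := blk q.1 (used q.1) (e q.1) q.2
  have used_succ : ∀ i, used (i + 1) = used i ∪ Finset.univ.image fun r => η (i, r) :=
    fun _ => rfl
  have mem_used : ∀ {i j : ℕ} (r : ι), i < j → η (i, r) ∈ used j := by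
    intro i j r hij
    induction j with
    | zero => omega
    | succ j ih =>
      rw [used_succ, Finset.mem_union, Finset.mem_image]
      rcases Nat.lt_succ_iff_lt_or_eq.1 hij with h | rfl
      · exact Or.inl (ih h)
      · exact Or.inr ⟨r, Finset.mem_univ _, rfl⟩
  have used_subset : ∀ j, ∀ a ∈ used j, a ∈ range η := by
    intro j
    induction j with
    | zero => simp [used]
    | succ j ih =>
      simp only [used_succ, Finset.mem_union, Finset.mem_image]
      rintro a (ha | ⟨r, -, rfl⟩)
      exacts [ih a ha, mem_range_self _]
  have hinjη : Injective η := by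
    rintro ⟨i, r⟩ ⟨j, r'⟩ h
    rcases lt_trichotomy i j with hij | rfl | hij
    · exact absurd (h ▸ mem_used r hij) (hfresh _ _ _ r')
    · exact congrArg _ (hinj _ _ _ h)
    · exact absurd (h.symm ▸ mem_used r' hij) (hfresh _ _ _ r)
  have hsurjη : Surjective η := by
    intro a
    obtain ⟨j, rfl⟩ := he a
    rcases hcover j (used j) (e j) with h | ⟨r, hr⟩
    · exact used_subset j _ h
    · exact ⟨(j, r), hr⟩
  exact ⟨Equiv.ofBijective η ⟨hinjη, hsurjη⟩, fun i => hblk i (used i) (e i)⟩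

variable {α : Type*} [Infinite α]

theorem exists_injective_fin_fresh (s : Finset α) (x : α) (m : ℕ) :
    ∃ c : Fin (m + 1) → α, Injective c ∧ (∀ r, c r ∉ s) ∧ (x ∈ s ∨ x ∈ range c) := by
  classical
  have ht : ((insert x s : Finset α) : Set α)ᶜ.Infinite := (Finset.finite_toSet _).infinite_compl
  let k : ℕ → α := fun n => (Set.Infinite.natEmbedding _ ht n : α)
  have hk : Injective k := Subtype.val_injective.comp (Set.Infinite.natEmbedding _ ht).injective
  have hks : ∀ n, k n ≠ x ∧ k n ∉ s := fun n => by
    simpa [not_or] using (Set.Infinite.natEmbedding _ ht n).2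
  by_cases hx : x ∈ s
  · exact ⟨fun r => k r, hk.comp Fin.val_injective, fun r => (hks r).2, Or.inl hx⟩
  · refine ⟨Fin.cons x fun r => k r, Fin.cons_injective_iff.2 ⟨?_, hk.comp Fin.val_injective⟩,
      Fin.cases hx fun r => (hks r).2, Or.inr ⟨0, rfl⟩⟩
    rintro ⟨r, hr⟩
    exact (hks r).1 hr

theorem exists_notMem_and_mul_notMem {G : Type*} [Group G] [Infinite G] (g : G) (s : Finset G) :
    ∃ a, a ∉ s ∧ g * a ∉ s := by
  classical
  obtain ⟨a, ha⟩ := Infinite.exists_notMem_finset (s ∪ s.image (g⁻¹ * ·))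
  simp only [Finset.mem_union, Finset.mem_image, not_or, not_exists, not_and] at ha
  exact ⟨a, ha.1, fun h => ha.2 _ h (inv_mul_cancel_left g a)⟩

theorem exists_block_of_ne_one {G : Type*} [Group G] [Infinite G] {g : G} (hg : g ≠ 1)
    (s : Finset G) (x : G) :
    ∃ b : Fin 8 → G, Injective b ∧ (∀ r, b r ∉ s) ∧ (x ∈ s ∨ x ∈ range b) ∧
      b 2 = g * b 0 ∧ b 4 = g * b 1 := by
  classical
  obtain ⟨a, ha, hga⟩ := exists_notMem_and_mul_notMem g s
  obtain ⟨d, hd, hgd⟩ := exists_notMem_and_mul_notMem g (insert a (insert (g * a) s))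
  obtain ⟨c, hc, hcs, hx⟩ :=
    exists_injective_fin_fresh (insert a (insert (g * a) (insert d (insert (g * d) s)))) x 3
  simp only [Finset.mem_insert, not_or] at hd hgd hcs
  refine ⟨![a, d, g * a, c 0, g * d, c 1, c 2, c 3], ?_, ?_, ?_, rfl, rfl⟩
  · intro i j h
    fin_cases i <;> fin_cases j <;> simp at h ⊢ <;> grind [hc.eq_iff]
  · intro r
    fin_cases r <;> simp <;> grind
  · rcases hx with hx | ⟨r, rfl⟩
    · simp only [Finset.mem_insert] at hx
      rcases hx with rfl | rfl | rfl | rfl | hx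
      exacts [Or.inr ⟨0, rfl⟩, Or.inr ⟨2, rfl⟩, Or.inr ⟨1, rfl⟩, Or.inr ⟨4, rfl⟩, Or.inl hx]
    · fin_cases r
      exacts [Or.inr ⟨3, rfl⟩, Or.inr ⟨5, rfl⟩, Or.inr ⟨6, rfl⟩, Or.inr ⟨7, rfl⟩]

end BlockEnumeration

section ShiftCoding

attribute [local instance] arrowAction

theorem shiftRel_iff {G S : Type} [Group G] {x y : G → S} :
    ShiftRel G x y ↔ ∃ g : G, y = g • x := by
  simp only [ShiftRel, funext_iff]
  rfl

def realPos (n : ℕ) : ℕ := 8 * (n / 2) + 6 + n % 2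

theorem realPos_strictMono : StrictMono realPos :=
  strictMono_nat_of_lt_succ fun n => by simp only [realPos]; omega

theorem even_realPos_iff (n : ℕ) : Even (realPos n) ↔ Even n := by
  simp only [Nat.even_iff, realPos]; omega

theorem notMem_range_realPos (i : ℕ) {r : ℕ} (hr : r < 6) : 8 * i + r ∉ range realPos := by
  rintro ⟨n, hn⟩
  simp only [realPos] at hn
  omega

def markerVal {S : Type} (s0 s1 : S) (n : ℕ) : S := if n % 8 = 2 then s1 else s0

def IsCodingEnum {G : Type} [Group G] (π : ℕ ≃ G) : Prop :=
  ∀ g ≠ 1, ∃ i, π (8 * i + 2) = g * π (8 * i) ∧ π (8 * i + 4) = g * π (8 * i + 1)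

theorem exists_isCodingEnum (G : Type) [Group G] [Countable G] [Infinite G] :
    ∃ π : ℕ ≃ G, IsCodingEnum π := by
  have : Nonempty {g : G // g ≠ 1} := (exists_ne (1 : G)).elim fun g hg => ⟨⟨g, hg⟩⟩
  obtain ⟨h, hh⟩ := exists_surjective_nat {g : G // g ≠ 1}
  obtain ⟨η, hη⟩ := exists_equiv_prod_of_exists_block
    (fun i (b : Fin 8 → G) => b 2 = (h i : G) * b 0 ∧ b 4 = (h i : G) * b 1)
    fun i s x => exists_block_of_ne_one (h i).2 s x
  refine ⟨(Nat.divModEquiv 8).trans η, fun g hg => ?_⟩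
  obtain ⟨i, hi⟩ := hh ⟨g, hg⟩
  have hpos : ∀ r (hr : r < 8), (Nat.divModEquiv 8).trans η (8 * i + r) = η (i, ⟨r, hr⟩) :=
    fun r hr => by
      rw [mul_comm]
      exact congrArg η ((Nat.divModEquiv 8).apply_symm_apply (i, ⟨r, hr⟩))
  obtain ⟨h2, h4⟩ := hη i
  rw [hi] at h2 h4
  exact ⟨i, (hpos 2 (by norm_num)).trans (h2.trans (congrArg _ (hpos 0 (by norm_num)).symm)),
    (hpos 4 (by norm_num)).trans (h4.trans (congrArg _ (hpos 1 (by norm_num)).symm))⟩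

variable {G S : Type} (π : ℕ ≃ G) (s0 s1 : S)

def markedSet : Set (G → S) :=
  {y | ∀ n, Even n → n ∉ range realPos → y (π n) = markerVal s0 s1 n}

def decode (y : G → S) (n : ℕ) : S := y (π (realPos n))

def markedOrbit [Group G] : Set (G → S) := {y | ∃ g : G, g • y ∈ markedSet π s0 s1}

open Classical in
noncomputable def decodeOrbit [Group G] (y : G → S) : ℕ → S :=
  if h : ∃ g : G, g • y ∈ markedSet π s0 s1 then decode π (h.choose • y) else decode π y

def codingSet [Group G] (A : Set (ℕ → S)) : Set (G → S) :=
  decodeOrbit π s0 s1 ⁻¹' A ∩ markedOrbit π s0 s1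

variable {π s0 s1}

theorem decode_comp_symm (w : ℕ → S) : decode π (fun g => w (π.symm g)) = w ∘ realPos := by
  funext n
  simp [decode]

theorem continuous_decode [TopologicalSpace S] : Continuous (decode π : (G → S) → ℕ → S) :=
  continuous_pi fun _ => continuous_apply _

theorem isClosed_markedSet [TopologicalSpace S] [T2Space S] : IsClosed (markedSet π s0 s1) := by
  simp only [markedSet, ofPred_forall]
  exact isClosed_iInter fun n => isClosed_iInter fun _ => isClosed_iInter fun _ =>
    isClosed_eq (continuous_apply _) continuous_const

variable [Group G]

theorem eq_one_of_mem_markedSet_of_smul_mem (hπ : IsCodingEnum π) (hs : s0 ≠ s1) {y : G → S}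
    (hy : y ∈ markedSet π s0 s1) {g : G} (hgy : g • y ∈ markedSet π s0 s1) : g = 1 := by
  by_contra hg
  obtain ⟨i, h2, -⟩ := hπ g hg
  have h₀ := hy (8 * i) (Nat.even_iff.2 (by omega)) (notMem_range_realPos i (r := 0) (by omega))
  have h₂ := hgy (8 * i + 2) (Nat.even_iff.2 (by omega)) (notMem_range_realPos i (by omega))
  rw [h2, markerVal, if_pos (by omega)] at h₂
  change y (g⁻¹ * (g * π (8 * i))) = s1 at h₂
  rw [inv_mul_cancel_left, h₀, markerVal, if_neg (by omega)] at h₂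
  exact hs h₂

theorem eq_one_of_junk_of_smul_mem (hπ : IsCodingEnum π) (hs : s0 ≠ s1) {y : G → S}
    (hy : ∀ n, Odd n → n ∉ range realPos → y (π n) = s1) {g : G}
    (hgy : g • y ∈ markedSet π s0 s1) : g = 1 := by
  by_contra hg
  obtain ⟨i, -, h4⟩ := hπ g hg
  have h₁ := hy (8 * i + 1) (Nat.odd_iff.2 (by omega)) (notMem_range_realPos i (by omega))
  have h₄ := hgy (8 * i + 4) (Nat.even_iff.2 (by omega)) (notMem_range_realPos i (by omega))
  rw [h4, markerVal, if_neg (by omega)] at h₄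
  change y (g⁻¹ * (g * π (8 * i + 1))) = s0 at h₄
  rw [inv_mul_cancel_left, h₁] at h₄
  exact hs h₄.symm

theorem eq_of_smul_mem_markedSet (hπ : IsCodingEnum π) (hs : s0 ≠ s1) {y : G → S} {g h : G}
    (hg : g • y ∈ markedSet π s0 s1) (hh : h • y ∈ markedSet π s0 s1) : g = h := by
  have : (g * h⁻¹) • h • y ∈ markedSet π s0 s1 := by rwa [smul_smul, inv_mul_cancel_right]
  exact mul_inv_eq_one.1 (eq_one_of_mem_markedSet_of_smul_mem hπ hs hh this)

theorem decodeOrbit_eq (hπ : IsCodingEnum π) (hs : s0 ≠ s1) {y : G → S} {g : G}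
    (hg : g • y ∈ markedSet π s0 s1) : decodeOrbit π s0 s1 y = decode π (g • y) := by
  have h : ∃ g : G, g • y ∈ markedSet π s0 s1 := ⟨g, hg⟩
  rw [decodeOrbit, dif_pos h, eq_of_smul_mem_markedSet hπ hs h.choose_spec hg]

theorem decodeOrbit_eq_decode (hπ : IsCodingEnum π) (hs : s0 ≠ s1) {y : G → S}
    (hy : y ∈ markedSet π s0 s1) : decodeOrbit π s0 s1 y = decode π y := by
  rw [decodeOrbit_eq hπ hs (g := 1) (by rwa [one_smul]), one_smul]

theorem mem_markedOrbit_of_mem {y : G → S} (hy : y ∈ markedSet π s0 s1) :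
    y ∈ markedOrbit π s0 s1 :=
  ⟨1, by rwa [one_smul]⟩

theorem decodeOrbit_eq_of_notMem {y : G → S} (hy : y ∉ markedOrbit π s0 s1) :
    decodeOrbit π s0 s1 y = decode π y :=
  dif_neg hy

theorem smul_mem_markedOrbit_iff (g : G) {y : G → S} :
    g • y ∈ markedOrbit π s0 s1 ↔ y ∈ markedOrbit π s0 s1 := by
  constructor
  · rintro ⟨h, hh⟩
    exact ⟨h * g, by rwa [mul_smul]⟩
  · rintro ⟨h, hh⟩
    exact ⟨h * g⁻¹, by rwa [smul_smul, inv_mul_cancel_right]⟩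

theorem decodeOrbit_smul (hπ : IsCodingEnum π) (hs : s0 ≠ s1) (g : G) {y : G → S}
    (hy : y ∈ markedOrbit π s0 s1) : decodeOrbit π s0 s1 (g • y) = decodeOrbit π s0 s1 y := by
  obtain ⟨h, hh⟩ := hy
  have hh' : (h * g⁻¹) • g • y ∈ markedSet π s0 s1 := by rwa [smul_smul, inv_mul_cancel_right]
  rw [decodeOrbit_eq hπ hs hh', decodeOrbit_eq hπ hs hh, smul_smul, inv_mul_cancel_right]

theorem codingSet_shiftInvariant (hπ : IsCodingEnum π) (hs : s0 ≠ s1) (A : Set (ℕ → S))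
    {x y : G → S} (hxy : ShiftRel G x y) : x ∈ codingSet π s0 s1 A ↔ y ∈ codingSet π s0 s1 A := by
  obtain ⟨g, rfl⟩ := shiftRel_iff.1 hxy
  simp only [codingSet, mem_inter_iff, mem_preimage, smul_mem_markedOrbit_iff]
  exact and_congr_left fun hx => by rw [decodeOrbit_smul hπ hs g hx]

section Topology

variable [TopologicalSpace S]

theorem continuous_smul_arrow (g : G) : Continuous fun y : G → S => g • y :=
  continuous_pi fun _ => continuous_apply _

theorem markedOrbit_mem_sigmaLevel_one [Countable G] [T2Space S] :
    markedOrbit π s0 s1 ∈ sigmaLevel (G → S) 1 := by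
  have : markedOrbit π s0 s1 = ⋃ g : G, (g • ·) ⁻¹' markedSet π s0 s1 := by
    ext y
    simp [markedOrbit]
  rw [this]
  exact iUnion_mem_sigmaLevel_succ fun g =>
    (isClosed_markedSet.preimage (continuous_smul_arrow g)).mem_sigmaLevel_one

variable [Countable G] [DiscreteTopology S]

theorem delta06Measurable_decodeOrbit (hπ : IsCodingEnum π) (hs : s0 ≠ s1) :
    Delta06Measurable (decodeOrbit π s0 s1) := by
  classical
  refine fun U hU => isDelta06_of_mem_sigmaLevel (n := 2) ?_ (by norm_num)
  refine preimage_mem_sigmaLevel_of_piecewise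
    (P := fun o : Option G => o.elim (markedOrbit π s0 s1)ᶜ fun g => (g • ·) ⁻¹' markedSet π s0 s1)
    (F := fun o => o.elim (decode π) fun g y => decode π (g • y)) ?_ ?_ ?_ ?_ hU
  · rintro (_ | g)
    · exact compl_mem_sigmaLevel_succ markedOrbit_mem_sigmaLevel_one
    · exact sigmaLevel_mono (by norm_num)
        (isClosed_markedSet.preimage (continuous_smul_arrow g)).mem_sigmaLevel_one
  · rintro (_ | g)
    · exact continuous_decode
    · exact continuous_decode.comp (continuous_smul_arrow g)
  · intro y
    by_cases hy : y ∈ markedOrbit π s0 s1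
    · obtain ⟨g, hg⟩ := hy
      exact ⟨some g, hg⟩
    · exact ⟨none, hy⟩
  · rintro (_ | g) y hy
    · exact decodeOrbit_eq_of_notMem hy
    · exact decodeOrbit_eq hπ hs hy

theorem codingSet_mem {Γ : Pointclass} (hΓ : Reasonable Γ) (hπ : IsCodingEnum π) (hs : s0 ≠ s1)
    {A : Set (ℕ → S)} (hA : A ∈ Γ.mem (ℕ → S)) : codingSet π s0 s1 A ∈ Γ.mem (G → S) :=
  hΓ.inter_delta _ _ _ (hΓ.delta_subst _ _ _ (delta06Measurable_decodeOrbit hπ hs) A hA)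
    (isDelta06_of_mem_sigmaLevel markedOrbit_mem_sigmaLevel_one (by norm_num))

end Topology

theorem gameDetermined_of_codingSet (hπ : IsCodingEnum π) (hs : s0 ≠ s1) {A : Set (ℕ → S)}
    (h : GameDetermined {x : ℕ → S | (fun g => x (π.symm g)) ∈ codingSet π s0 s1 A}) :
    GameDetermined A := by
  refine h.of_strictMono realPos_strictMono even_realPos_iff (markerVal s0 s1) (fun _ => s1)
    (fun w hw hjunk => ?_) (fun w hw hmarked hwA => hw ?_)
  · obtain ⟨hwA, g, hg⟩ := hw
    obtain rfl := eq_one_of_junk_of_smul_mem hπ hs (fun n hn hr => by simpa using hjunk n hn hr) hg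
    rw [one_smul] at hg
    rwa [mem_preimage, decodeOrbit_eq_decode hπ hs hg, decode_comp_symm] at hwA
  · have hy : (fun g => w (π.symm g)) ∈ markedSet π s0 s1 := fun n hn hr => by
      simpa using hmarked n hn hr
    exact ⟨by rwa [mem_preimage, decodeOrbit_eq_decode hπ hs hy, decode_comp_symm],
      mem_markedOrbit_of_mem hy⟩

end ShiftCoding

theorem gammaDetOn_of_gammaShiftDet {G S : Type} [Group G] [Countable G] [Infinite G]
    [TopologicalSpace S] [DiscreteTopology S] [Nontrivial S] {Γ : Pointclass}
    (hΓ : Reasonable Γ) (h : GammaShiftDet Γ G S) : GammaDetOn Γ S := by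
  obtain ⟨s0, s1, hs⟩ := exists_pair_ne S
  obtain ⟨π, hπ⟩ := exists_isCodingEnum G
  exact fun A hA => gameDetermined_of_codingSet hπ hs <|
    h _ (codingSet_mem hΓ hπ hs hA) (fun _ _ => codingSet_shiftInvariant hπ hs A) π

theorem stmt0 (G : Type) [Group G] [Countable G] [Infinite G]
    (Γ : Pointclass) (hΓ : Reasonable Γ) :
    (GammaShiftDet Γ G Bool → GammaDetOn Γ Bool) ∧
    (GammaShiftDet Γ G ℕ → GammaDetOn Γ ℕ) :=
  ⟨gammaDetOn_of_gammaShiftDet hΓ, gammaDetOn_of_gammaShiftDet hΓ⟩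
end

section
/- Every infinite group has an infinite weakly amenable subgroup. -/
/-!
Every countable group `G` is weakly amenable. Enumerate `G = {e₀, e₁, …}` and let `ℓ g` be the
least `n` with `g ∈ {1, e₀, …, e_{n-1}}ⁿ`; then `ℓ (g * h) ≤ ℓ g + ℓ h` and the sublevel sets of
`ℓ` are finite. Take the level sets of `ℓ` as the classes: left multiplication by `g` moves a
level by at most `ℓ g` up and `ℓ g⁻¹` down, and among the classes of level `≤ n` only those in
the top `ℓ g` levels can leave under `g`, while the number of such classes tends to infinity.
An infinite group contains a countably infinite subgroup.
-/

open Filter Set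

/-- Condition (2) of appropriateness: for each `g`, each class `C` meets at most `b` classes
after translation by `g`. -/
def classBound {G : Type*} [Group G] (r : Setoid G) (g : G) (b : ℕ) : Prop :=
  ∀ C : Quotient r,
    {C' : Quotient r | ∃ h : G, Quotient.mk r h = C ∧ Quotient.mk r (g * h) = C'}.encard ≤ (b : ℕ∞)

/-- An appropriate equivalence relation on a group `G`. -/
def AppropriateRel {G : Type*} [Group G] (r : Setoid G) : Prop :=
  Infinite (Quotient r) ∧ ∀ g : G, ∃ b : ℕ, classBound r g b

/-- The increasing sequence `A n` of finite sets of `∼`-classes witnesses the Følner-type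
condition in the definition of weak amenability. -/
def WAWitness {G : Type*} [Group G] (r : Setoid G) (A : ℕ → Finset (Quotient r)) : Prop :=
  Monotone A ∧ (∀ C : Quotient r, ∃ n, C ∈ A n) ∧
    ∀ g : G, Filter.Tendsto (fun n =>
      (({C : Quotient r | C ∈ A n ∧
          ∀ h : G, Quotient.mk r h = C → Quotient.mk r (g * h) ∈ A n}.ncard : ℝ)) /
        ((A n).card : ℝ)) Filter.atTop (nhds 1)

/-- A group is weakly amenable if it is finite or carries an appropriate equivalence relation
together with a witnessing increasing sequence of finite sets of classes. -/
def WeaklyAmenable (G : Type*) [Group G] : Prop :=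
  Finite G ∨ ∃ (r : Setoid G) (A : ℕ → Finset (Quotient r)), AppropriateRel r ∧ WAWitness r A

open Pointwise Topology

theorem Subgroup.countable_closure {G : Type*} [Group G] {s : Set G} (hs : s.Countable) :
    Countable (closure s) := by
  have : Countable ↥(s ∪ s⁻¹) := (hs.union (hs.preimage inv_injective)).to_subtype
  refine ((countable_range fun l : List ↥(s ∪ s⁻¹) => (l.map (↑)).prod).mono ?_).to_subtype
  intro g hg
  rw [SetLike.mem_coe, ← mem_toSubmonoid, closure_toSubmonoid] at hg
  obtain ⟨l, hl, rfl⟩ := Submonoid.exists_list_of_mem_closure hg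
  lift l to List ↥(s ∪ s⁻¹) using hl
  exact ⟨l, rfl⟩

theorem Set.Finite.pow {M : Type*} [Monoid M] {s : Set M} (hs : s.Finite) (n : ℕ) :
    (s ^ n).Finite := by
  induction n with
  | zero => simp
  | succ n ih => rw [pow_succ]; exact ih.mul hs

theorem tendsto_card_atTop_of_monotone {α : Type*} [Infinite α] {A : ℕ → Finset α}
    (hA : Monotone A) (hcover : ∀ a, ∃ n, a ∈ A n) :
    Tendsto (fun n => (A n).card) atTop atTop := by
  refine tendsto_atTop_atTop.2 fun k => ?_
  obtain ⟨s, rfl⟩ := Infinite.exists_subset_card_eq α k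
  choose N hN using hcover
  exact ⟨s.sup N, fun n hn =>
    Finset.card_le_card fun a ha => hA ((Finset.le_sup ha).trans hn) (hN a)⟩

theorem tendsto_div_of_le_of_le_add {a b : ℕ → ℕ} {c : ℕ} (ha : Tendsto a atTop atTop)
    (hba : ∀ n, b n ≤ a n) (hab : ∀ n, a n ≤ b n + c) :
    Tendsto (fun n => (b n : ℝ) / a n) atTop (𝓝 1) := by
  have hlower : Tendsto (fun n => 1 - (c : ℝ) / a n) atTop (𝓝 1) := by
    simpa using (tendsto_const_nhds (x := (1 : ℝ))).sub
      ((tendsto_const_nhds (x := (c : ℝ))).div_atTop (tendsto_natCast_atTop_atTop.comp ha))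
  refine tendsto_of_tendsto_of_tendsto_of_le_of_le' hlower tendsto_const_nhds ?_
    (Eventually.of_forall fun n => div_le_one_of_le₀ (by exact_mod_cast hba n) (by positivity))
  filter_upwards [ha.eventually_gt_atTop 0] with n hn
  have hpos : (0 : ℝ) < a n := by exact_mod_cast hn
  have hab' : (a n : ℝ) ≤ b n + c := by exact_mod_cast hab n
  rw [le_div_iff₀ hpos, sub_mul, div_mul_cancel₀ _ hpos.ne']
  linarith

theorem Setoid.infinite_quotient_ker {α β : Type*} {f : α → β} (hf : (range f).Infinite) :
    Infinite (Quotient (Setoid.ker f)) := by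
  rw [← Setoid.range_kerLift_eq_range] at hf
  have := hf.to_subtype
  exact Infinite.of_surjective _ (rangeFactorization_surjective (f := Setoid.kerLift f))

noncomputable def sublevelClasses {α : Type*} (ℓ : α → ℕ) (n : ℕ) :
    Finset (Quotient (Setoid.ker ℓ)) :=
  (Finset.Iic n).preimage (Setoid.kerLift ℓ) (Setoid.kerLift_injective ℓ).injOn

theorem mem_sublevelClasses {α : Type*} {ℓ : α → ℕ} {n : ℕ} {C : Quotient (Setoid.ker ℓ)} :
    C ∈ sublevelClasses ℓ n ↔ Setoid.kerLift ℓ C ≤ n := by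
  simp [sublevelClasses]

section LengthFunction

variable {Γ : Type*} [Group Γ] {ℓ : Γ → ℕ}

theorem appropriateRel_ker (hℓ : ∀ g, ∃ c, ∀ h, ℓ (g * h) ≤ ℓ h + c)
    (hrange : (range ℓ).Infinite) : AppropriateRel (Setoid.ker ℓ) := by
  refine ⟨Setoid.infinite_quotient_ker hrange, fun g => ?_⟩
  obtain ⟨c, hc⟩ := hℓ g
  obtain ⟨c', hc'⟩ := hℓ g⁻¹
  refine ⟨c + c' + 1, fun C => ?_⟩
  induction C using Quotient.inductionOn with | h a => ?_
  set S := {C' | ∃ h, Quotient.mk (Setoid.ker ℓ) h = ⟦a⟧ ∧ Quotient.mk _ (g * h) = C'}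
  have himage : Setoid.kerLift ℓ '' S ⊆ ↑(Finset.Icc (ℓ a - c') (ℓ a + c)) := by
    rintro _ ⟨_, ⟨h, hh, rfl⟩, rfl⟩
    have hha : ℓ h = ℓ a := Quotient.exact hh
    have := hc' (g * h)
    rw [inv_mul_cancel_left] at this
    simp only [Setoid.kerLift_mk, Finset.coe_Icc, mem_Icc]
    constructor <;> [omega; linarith [hc h]]
  calc S.encard = (Setoid.kerLift ℓ '' S).encard :=
        ((Setoid.kerLift_injective ℓ).injOn.encard_image).symm
    _ ≤ (Finset.Icc (ℓ a - c') (ℓ a + c)).card := by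
        rw [← encard_coe_eq_coe_finsetCard]; exact encard_le_encard himage
    _ ≤ (c + c' + 1 : ℕ) := by simp only [Nat.card_Icc, Nat.cast_le]; omega

theorem waWitness_sublevelClasses (hℓ : ∀ g, ∃ c, ∀ h, ℓ (g * h) ≤ ℓ h + c)
    (hrange : (range ℓ).Infinite) : WAWitness (Setoid.ker ℓ) (sublevelClasses ℓ) := by
  have := Setoid.infinite_quotient_ker hrange
  have hmono : Monotone (sublevelClasses ℓ) := fun m n hmn C hC =>
    mem_sublevelClasses.2 ((mem_sublevelClasses.1 hC).trans hmn)
  have hcover (C : Quotient (Setoid.ker ℓ)) : ∃ n, C ∈ sublevelClasses ℓ n :=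
    ⟨_, mem_sublevelClasses.2 le_rfl⟩
  refine ⟨hmono, hcover, fun g => ?_⟩
  obtain ⟨c, hc⟩ := hℓ g
  set A := sublevelClasses ℓ
  set good := fun n => {C | C ∈ A n ∧ ∀ h, Quotient.mk (Setoid.ker ℓ) h = C → ⟦g * h⟧ ∈ A n}
  have hgood_sub (n : ℕ) : good n ⊆ ↑(A n) := fun C hC => hC.1
  have hlow_sub (n : ℕ) : ↑((A n).filter (Setoid.kerLift ℓ · + c ≤ n)) ⊆ good n := by
    intro C hC
    rw [Finset.mem_coe, Finset.mem_filter] at hC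
    refine ⟨hC.1, fun h hh => mem_sublevelClasses.2 ?_⟩
    subst hh
    rw [Setoid.kerLift_mk] at hC ⊢
    linarith [hc h, hC.2]
  have hhigh_card (n : ℕ) : ((A n).filter (¬ Setoid.kerLift ℓ · + c ≤ n)).card ≤ c := by
    refine (Finset.card_le_card_of_injOn (Setoid.kerLift ℓ) (t := Finset.Ico (n + 1 - c) (n + 1))
      (fun C hC => ?_) (Setoid.kerLift_injective ℓ).injOn).trans (by rw [Nat.card_Ico]; omega)
    rw [Finset.mem_coe, Finset.mem_filter] at hC
    have := mem_sublevelClasses.1 hC.1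
    simp only [Finset.coe_Ico, mem_Ico]
    omega
  refine tendsto_div_of_le_of_le_add (b := fun n => (good n).ncard) (c := c)
    (tendsto_card_atTop_of_monotone hmono hcover) (fun n => ?_) (fun n => ?_)
  · simpa using ncard_le_ncard (hgood_sub n)
  · rw [← Finset.card_filter_add_card_filter_not (s := A n) (Setoid.kerLift ℓ · + c ≤ n)]
    have := ncard_le_ncard (hlow_sub n) ((A n).finite_toSet.subset (hgood_sub n))
    rw [ncard_coe_finset] at this
    linarith [hhigh_card n]

theorem weaklyAmenable_of_length (ℓ : Γ → ℕ) (hℓ : ∀ g, ∃ c, ∀ h, ℓ (g * h) ≤ ℓ h + c)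
    (hrange : (range ℓ).Infinite) : WeaklyAmenable Γ :=
  Or.inr ⟨_, _, appropriateRel_ker hℓ hrange, waWitness_sublevelClasses hℓ hrange⟩

end LengthFunction

section EnumLength

variable {G : Type*} [Monoid G] {e : ℕ → G}

variable (e) in
def enumBall (n : ℕ) : Set G := insert 1 (e '' Iio n) ^ n

theorem enumBall_mono : Monotone (enumBall e) := fun _ _ hmn =>
  pow_subset_pow (insert_subset_insert (image_mono (Iio_subset_Iio hmn))) (mem_insert _ _) hmn

theorem enumBall_mul_subset (m n : ℕ) : enumBall e m * enumBall e n ⊆ enumBall e (m + n) := by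
  unfold enumBall
  rw [pow_add]
  exact mul_subset_mul
    (pow_subset_pow_left (insert_subset_insert (image_mono (Iio_subset_Iio le_self_add))))
    (pow_subset_pow_left (insert_subset_insert (image_mono (Iio_subset_Iio le_add_self))))

theorem enumBall_finite (n : ℕ) : (enumBall e n).Finite :=
  (((finite_Iio n).image e).insert 1).pow n

theorem apply_mem_enumBall (k : ℕ) : e k ∈ enumBall e (k + 1) :=
  pow_subset_pow_right (mem_insert _ _) le_add_self
    (by rw [pow_one]; exact mem_insert_of_mem _ (mem_image_of_mem e (Nat.lt_succ_self k)))

variable (e) in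
noncomputable def enumLength (g : G) : ℕ := sInf {n | g ∈ enumBall e n}

theorem mem_enumBall_enumLength (he : e.Surjective) (g : G) :
    g ∈ enumBall e (enumLength e g) := by
  obtain ⟨k, rfl⟩ := he g
  exact Nat.sInf_mem (s := {n | e k ∈ enumBall e n}) ⟨k + 1, apply_mem_enumBall k⟩

theorem enumLength_le_of_mem {g : G} {n : ℕ} (hg : g ∈ enumBall e n) : enumLength e g ≤ n :=
  Nat.sInf_le hg

theorem enumLength_mul_le (he : e.Surjective) (g h : G) :
    enumLength e (g * h) ≤ enumLength e g + enumLength e h :=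
  enumLength_le_of_mem <| enumBall_mul_subset _ _ <|
    mul_mem_mul (mem_enumBall_enumLength he g) (mem_enumBall_enumLength he h)

theorem infinite_range_enumLength [Infinite G] (he : e.Surjective) :
    (range (enumLength e)).Infinite := by
  intro hfin
  obtain ⟨N, hN⟩ := hfin.bddAbove
  have : univ ⊆ enumBall e N := fun g _ =>
    enumBall_mono (hN ⟨g, rfl⟩) (mem_enumBall_enumLength he g)
  exact infinite_univ ((enumBall_finite N).subset this)

end EnumLength

theorem weaklyAmenable_of_countable (G : Type*) [Group G] [Countable G] : WeaklyAmenable G := by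
  rcases finite_or_infinite G with hfin | _
  · exact Or.inl hfin
  obtain ⟨e, he⟩ := exists_surjective_nat G
  exact weaklyAmenable_of_length (enumLength e)
    (fun g => ⟨enumLength e g, fun h => (enumLength_mul_le he g h).trans_eq (add_comm _ _)⟩)
    (infinite_range_enumLength he)

theorem stmt1 (G : Type*) [Group G] [Infinite G] :
    ∃ H : Subgroup G, Infinite H ∧ WeaklyAmenable H := by
  set s := range (Infinite.natEmbedding G)
  have hs : s.Infinite := infinite_range_of_injective (Infinite.natEmbedding G).injective
  have : Countable (Subgroup.closure s) := Subgroup.countable_closure (countable_range _)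
  exact ⟨Subgroup.closure s, (hs.mono Subgroup.subset_closure).to_subtype,
    weaklyAmenable_of_countable _⟩
end

section
/- Let H be an infinite group generated by a finite subgroup F together with an element g of finite order. Then H is weakly amenable. Moreover, this is witnessed by the equivalence relation h₁ ∼ h₂ iff |h₁| = |h₂|, where |h| is the minimal n such that h can be written as f₁g^{a₁}f₂g^{a₂}⋯f_ng^{a_n} with each f_i ∈ F and each a_i a positive integer less than the order of g: each ∼-class is finite, ∼ is appropriate with b(h) = 2|h| + 2, and the sets A_n = {[h]_∼ : |h| ≤ n} satisfy the required limit condition. -/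
open Filter Set

/-- The minimal length of a representation `h = f₁ g^{a₁} f₂ g^{a₂} ⋯ f_n g^{a_n}` with
`f_i ∈ F` and `0 < a_i < orderOf g`. -/
noncomputable def repLength {H : Type*} [Group H] (F : Subgroup H) (g : H) (h : H) : ℕ :=
  sInf {n | ∃ (f : Fin n → H) (a : Fin n → ℕ),
    (∀ i, f i ∈ F) ∧ (∀ i, 0 < a i ∧ a i < orderOf g) ∧
    h = (List.ofFn (fun i : Fin n => f i * g ^ (a i))).prod}

/-- The equivalence relation `h₁ ∼ h₂ ↔ |h₁| = |h₂|` for the representation length. -/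
noncomputable def lenSetoid {H : Type*} [Group H] (F : Subgroup H) (g : H) : Setoid H :=
  Setoid.ker (repLength F g)

/-- The set of classes of elements of length at most `n`. -/
def lenClasses {H : Type*} [Group H] (F : Subgroup H) (g : H) (n : ℕ) :
    Set (Quotient (lenSetoid F g)) :=
  {C | ∃ h : H, Quotient.mk (lenSetoid F g) h = C ∧ repLength F g h ≤ n}

/-!
Write `|h|` for `repLength F g h`. Since `g ^ orderOf g = 1`, a word for `k` can be inverted
block by block and glued onto a nonempty word for `w`, the leftover `f⁻¹` merging into the first
block of `w`; so `|k⁻¹ w| ≤ |k| + |w|` for `w ≠ 1`, besides the subadditivity `|k h| ≤ |k| + |h|`.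
Hence `k` moves the class of length `m` only to the classes of lengths in `[m - |k|, m + |k|]` or
to the class of `1`, and `k` keeps every class of length at most `n - |k|` inside `A n`. There are
only finitely many words of bounded length over a finite alphabet, so the classes are finite,
hence infinitely many, `|A n| → ∞`, and the at most `|k|` bad classes of `A n` become negligible.
-/

lemma tendsto_natCast_div_of_le_of_le_add {a b : ℕ → ℕ} (L : ℕ) (hab : ∀ n, a n ≤ b n)
    (hba : ∀ᶠ n in atTop, b n ≤ a n + L) (hb : Tendsto b atTop atTop) :
    Tendsto (fun n => (a n : ℝ) / b n) atTop (nhds 1) := by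
  have hbR : Tendsto (fun n => (b n : ℝ)) atTop atTop := tendsto_natCast_atTop_atTop.comp hb
  have hlow : Tendsto (fun n => 1 - (L : ℝ) / b n) atTop (nhds 1) := by
    simpa using tendsto_const_nhds.sub (tendsto_const_nhds.div_atTop hbR)
  refine tendsto_of_tendsto_of_tendsto_of_le_of_le' hlow tendsto_const_nhds ?_ ?_
  · filter_upwards [hba, hbR.eventually_gt_atTop 0] with n hn hpos
    rw [sub_le_iff_le_add, ← add_div, one_le_div hpos]
    exact_mod_cast hn
  · filter_upwards [hbR.eventually_gt_atTop 0] with n hpos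
    exact div_le_one_of_le₀ (by exact_mod_cast hab n) hpos.le

section KerSublevel

variable {G : Type*} (ℓ : G → ℕ)

def kerSublevel (n : ℕ) : Set (Quotient (Setoid.ker ℓ)) :=
  {C | ∃ x : G, Quotient.mk _ x = C ∧ ℓ x ≤ n}

lemma kerSublevel_eq_preimage (n : ℕ) : kerSublevel ℓ n = Setoid.kerLift ℓ ⁻¹' Iic n := by
  ext C
  induction C using Quotient.ind with
  | _ x =>
    refine ⟨fun ⟨y, hy, hle⟩ => ?_, fun hle => ⟨x, rfl, hle⟩⟩
    rwa [← hy]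

lemma kerSublevel_finite (n : ℕ) : (kerSublevel ℓ n).Finite := by
  rw [kerSublevel_eq_preimage]
  exact (finite_Iic n).preimage (Setoid.kerLift_injective ℓ).injOn

lemma kerSublevel_mono : Monotone (kerSublevel ℓ) := by
  intro m n hmn
  simp only [kerSublevel_eq_preimage]
  exact preimage_mono (Iic_subset_Iic.2 hmn)

lemma iUnion_kerSublevel : ⋃ n, kerSublevel ℓ n = univ :=
  eq_univ_of_forall fun C => mem_iUnion.2 ⟨Setoid.kerLift ℓ C, by simp [kerSublevel_eq_preimage]⟩

variable {ℓ}

lemma finite_setOf_mk_eq_of_finite_sublevel (hball : ∀ n, {x | ℓ x ≤ n}.Finite)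
    (C : Quotient (Setoid.ker ℓ)) : {x | Quotient.mk _ x = C}.Finite := by
  induction C using Quotient.ind with
  | _ y => exact (hball (ℓ y)).subset fun x hx => (Quotient.exact hx).le

lemma infinite_quotient_ker [Infinite G] (hball : ∀ n, {x | ℓ x ≤ n}.Finite) :
    Infinite (Quotient (Setoid.ker ℓ)) := by
  by_contra hfin
  rw [not_infinite_iff_finite] at hfin
  have hfibres := finite_setOf_mk_eq_of_finite_sublevel hball
  exact infinite_univ (α := G) <| (finite_iUnion hfibres).subset fun x _ => mem_iUnion.2 ⟨_, rfl⟩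

lemma tendsto_ncard_kerSublevel_atTop [Infinite (Quotient (Setoid.ker ℓ))] :
    Tendsto (fun n => (kerSublevel ℓ n).ncard) atTop atTop := by
  refine tendsto_atTop_atTop_of_monotone
    (fun m n hmn => ncard_le_ncard (kerSublevel_mono ℓ hmn) (kerSublevel_finite ℓ n)) fun N => ?_
  obtain ⟨B, -, hB⟩ := infinite_univ.exists_subset_card_eq (α := Quotient (Setoid.ker ℓ)) N
  refine ⟨B.sup (Setoid.kerLift ℓ), ?_⟩
  rw [← hB, ← ncard_coe_finset]
  refine ncard_le_ncard (fun C hC => ?_) (kerSublevel_finite ℓ _)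
  simpa [kerSublevel_eq_preimage] using Finset.le_sup (f := Setoid.kerLift ℓ) hC

end KerSublevel

section KerOfLength

variable {G : Type*} [Group G] {ℓ : G → ℕ}

lemma classBound_ker (hmul : ∀ x y, ℓ (x * y) ≤ ℓ x + ℓ y)
    (hinv_mul : ∀ x y, ℓ y ≠ 0 → ℓ (x⁻¹ * y) ≤ ℓ x + ℓ y) (k : G) :
    classBound (Setoid.ker ℓ) k (2 * ℓ k + 2) := by
  intro C
  set m := Setoid.kerLift ℓ C
  have hmaps : MapsTo (Setoid.kerLift ℓ)
      {C' | ∃ h, Quotient.mk _ h = C ∧ Quotient.mk _ (k * h) = C'}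
      ↑(insert 0 (Finset.Icc (m - ℓ k) (m + ℓ k))) := by
    rintro _ ⟨h, rfl, rfl⟩
    have hle := hmul k h
    have hge := hinv_mul k (k * h)
    rw [inv_mul_cancel_left] at hge
    simp only [Setoid.kerLift_mk, m, Finset.coe_insert, Finset.coe_Icc, mem_insert_iff, mem_Icc]
    omega
  refine (encard_le_encard_of_injOn hmaps (Setoid.kerLift_injective ℓ).injOn).trans ?_
  rw [encard_coe_eq_coe_finsetCard, Nat.cast_le]
  refine (Finset.card_insert_le _ _).trans ?_
  rw [Nat.card_Icc]
  omega

lemma ncard_kerSublevel_le_add (hmul : ∀ x y, ℓ (x * y) ≤ ℓ x + ℓ y) (k : G) {n : ℕ}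
    (hn : ℓ k ≤ n) :
    (kerSublevel ℓ n).ncard ≤ {C | C ∈ kerSublevel ℓ n ∧ ∀ h : G, Quotient.mk _ h = C →
      Quotient.mk _ (k * h) ∈ kerSublevel ℓ n}.ncard + ℓ k := by
  set good := {C | C ∈ kerSublevel ℓ n ∧ ∀ h : G, Quotient.mk _ h = C →
      Quotient.mk _ (k * h) ∈ kerSublevel ℓ n}
  have hcover : kerSublevel ℓ n ⊆ good ∪ Setoid.kerLift ℓ ⁻¹' Ioc (n - ℓ k) n := by
    intro C hC
    rw [kerSublevel_eq_preimage] at hC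
    by_cases hsmall : Setoid.kerLift ℓ C ≤ n - ℓ k
    · refine Or.inl ⟨by rwa [kerSublevel_eq_preimage], fun h hh => ?_⟩
      subst hh
      have := hmul k h
      simp only [kerSublevel_eq_preimage, mem_preimage, Setoid.kerLift_mk, mem_Iic] at hsmall ⊢
      omega
    · exact Or.inr ⟨not_le.1 hsmall, hC⟩
  have hbad : (Setoid.kerLift ℓ ⁻¹' Ioc (n - ℓ k) n).ncard ≤ ℓ k := by
    refine (ncard_le_ncard_of_injOn (Setoid.kerLift ℓ) (fun _ h => h)
      (Setoid.kerLift_injective ℓ).injOn (finite_Ioc _ _)).trans ?_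
    rw [ncard_Ioc_nat]
    omega
  calc (kerSublevel ℓ n).ncard
      ≤ (good ∪ Setoid.kerLift ℓ ⁻¹' Ioc (n - ℓ k) n).ncard :=
        ncard_le_ncard hcover (((kerSublevel_finite ℓ n).subset fun _ h => h.1).union
          ((finite_Ioc _ _).preimage (Setoid.kerLift_injective ℓ).injOn))
    _ ≤ good.ncard + (Setoid.kerLift ℓ ⁻¹' Ioc (n - ℓ k) n).ncard := ncard_union_le _ _
    _ ≤ good.ncard + ℓ k := by omega

lemma tendsto_ncard_kerSublevel_translate [Infinite (Quotient (Setoid.ker ℓ))]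
    (hmul : ∀ x y, ℓ (x * y) ≤ ℓ x + ℓ y) (k : G) :
    Tendsto (fun n => ({C | C ∈ kerSublevel ℓ n ∧ ∀ h : G, Quotient.mk _ h = C →
      Quotient.mk _ (k * h) ∈ kerSublevel ℓ n}.ncard : ℝ) / (kerSublevel ℓ n).ncard)
      atTop (nhds 1) :=
  tendsto_natCast_div_of_le_of_le_add (ℓ k)
    (fun n => ncard_le_ncard (fun _ h => h.1) (kerSublevel_finite ℓ n))
    ((eventually_ge_atTop (ℓ k)).mono fun _ hn => ncard_kerSublevel_le_add hmul k hn)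
    tendsto_ncard_kerSublevel_atTop

end KerOfLength

lemma weaklyAmenable_of_appropriateRel {G : Type*} [Group G] {r : Setoid G}
    (hr : AppropriateRel r) (A : ℕ → Set (Quotient r)) (hfin : ∀ n, (A n).Finite)
    (hmono : Monotone A) (hcover : ⋃ n, A n = univ)
    (htend : ∀ k : G, Tendsto (fun n => ({C | C ∈ A n ∧ ∀ h : G, Quotient.mk r h = C →
      Quotient.mk r (k * h) ∈ A n}.ncard : ℝ) / (A n).ncard) atTop (nhds 1)) :
    WeaklyAmenable G := by
  refine Or.inr ⟨r, fun n => (hfin n).toFinset, hr,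
    fun m n hmn => Finite.toFinset_subset_toFinset.2 (hmono hmn), fun C => ?_, fun k => ?_⟩
  · obtain ⟨n, hn⟩ := mem_iUnion.1 (hcover ▸ mem_univ C)
    exact ⟨n, (hfin n).mem_toFinset.2 hn⟩
  · simpa only [Finite.mem_toFinset, ← ncard_eq_toFinset_card _ (hfin _)] using htend k

section Words

variable {H : Type*} [Group H]

def IsWord (F : Subgroup H) (g : H) (l : List (H × ℕ)) : Prop :=
  ∀ p ∈ l, p.1 ∈ F ∧ 0 < p.2 ∧ p.2 < orderOf g

def wordProd (g : H) (l : List (H × ℕ)) : H :=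
  (l.map fun p => p.1 * g ^ p.2).prod

variable {F : Subgroup H} {g : H}

@[simp]
lemma wordProd_nil : wordProd g [] = 1 := rfl

@[simp]
lemma wordProd_cons (p : H × ℕ) (l : List (H × ℕ)) :
    wordProd g (p :: l) = p.1 * g ^ p.2 * wordProd g l := by
  simp [wordProd]

@[simp]
lemma wordProd_append (l₁ l₂ : List (H × ℕ)) :
    wordProd g (l₁ ++ l₂) = wordProd g l₁ * wordProd g l₂ := by
  simp [wordProd]

lemma isWord_nil : IsWord F g [] := fun _ h => absurd h List.not_mem_nil

lemma isWord_cons {p : H × ℕ} {l : List (H × ℕ)} :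
    IsWord F g (p :: l) ↔ (p.1 ∈ F ∧ 0 < p.2 ∧ p.2 < orderOf g) ∧ IsWord F g l :=
  List.forall_mem_cons

lemma IsWord.append {l₁ l₂ : List (H × ℕ)} (h₁ : IsWord F g l₁) (h₂ : IsWord F g l₂) :
    IsWord F g (l₁ ++ l₂) :=
  List.forall_mem_append.2 ⟨h₁, h₂⟩

lemma repLength_eq_sInf (h : H) :
    repLength F g h = sInf {n | ∃ l, IsWord F g l ∧ wordProd g l = h ∧ l.length = n} := by
  unfold repLength
  congr 1
  ext n
  constructor
  · rintro ⟨f, a, hf, ha, rfl⟩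
    refine ⟨List.ofFn fun i => (f i, a i), fun p hp => ?_, ?_, by simp⟩
    · obtain ⟨i, rfl⟩ := List.mem_ofFn.1 hp
      exact ⟨hf i, ha i⟩
    · simp [wordProd, List.map_ofFn, Function.comp_def]
  · rintro ⟨l, hl, rfl, rfl⟩
    refine ⟨fun i => l[i].1, fun i => l[i].2, fun i => (hl _ (l.getElem_mem i.2)).1,
      fun i => (hl _ (l.getElem_mem i.2)).2, ?_⟩
    conv_lhs => rw [wordProd, ← List.ofFn_getElem (xs := l), List.map_ofFn]
    rfl

lemma repLength_wordProd_le {l : List (H × ℕ)} (hl : IsWord F g l) :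
    repLength F g (wordProd g l) ≤ l.length := by
  rw [repLength_eq_sInf]
  exact Nat.sInf_le ⟨l, hl, rfl, rfl⟩

lemma exists_word_length_eq_repLength {h : H}
    (hh : ∃ l, IsWord F g l ∧ wordProd g l = h) :
    ∃ l, IsWord F g l ∧ wordProd g l = h ∧ l.length = repLength F g h := by
  obtain ⟨l, hl, hlh⟩ := hh
  have hne : {n | ∃ l, IsWord F g l ∧ wordProd g l = h ∧ l.length = n}.Nonempty :=
    ⟨l.length, l, hl, hlh, rfl⟩
  rw [repLength_eq_sInf]
  exact Nat.sInf_mem hne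

lemma exists_word_inv_mul {l w : List (H × ℕ)} (hl : IsWord F g l) (hw : IsWord F g w)
    (hw₀ : w ≠ []) :
    ∃ l', IsWord F g l' ∧ wordProd g l' = (wordProd g l)⁻¹ * wordProd g w ∧
      l'.length = l.length + w.length := by
  induction l generalizing w with
  | nil => exact ⟨w, hw, by simp, by simp⟩
  | cons p l ih =>
    obtain ⟨q, w, rfl⟩ := List.exists_cons_of_ne_nil hw₀
    rw [isWord_cons] at hl hw
    obtain ⟨⟨hpF, hp₀, hpm⟩, hl⟩ := hl
    obtain ⟨⟨hqF, hq⟩, hw⟩ := hw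
    -- `(p.1 * g ^ p.2)⁻¹ * q.1 = g ^ (orderOf g - p.2) * (p.1⁻¹ * q.1)`
    have hpow : g ^ (orderOf g - p.2) = (g ^ p.2)⁻¹ := by
      rw [pow_sub g hpm.le, pow_orderOf_eq_one, one_mul]
    obtain ⟨l', hl', hprod, hlen⟩ := ih (w := (1, orderOf g - p.2) :: (p.1⁻¹ * q.1, q.2) :: w)
      hl (isWord_cons.2 ⟨⟨F.one_mem, by omega, by omega⟩,
        isWord_cons.2 ⟨⟨F.mul_mem (F.inv_mem hpF) hqF, hq⟩, hw⟩⟩) (List.cons_ne_nil _ _)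
    refine ⟨l', hl', ?_, by simp only [hlen, List.length_cons]; omega⟩
    rw [hprod]
    simp only [wordProd_cons, hpow]
    group

lemma exists_word_inv (hg : 1 < orderOf g) {l : List (H × ℕ)} (hl : IsWord F g l) :
    ∃ l', IsWord F g l' ∧ wordProd g l' = (wordProd g l)⁻¹ := by
  have hw : IsWord F g [(1, 1), (1, orderOf g - 1)] :=
    isWord_cons.2 ⟨⟨F.one_mem, by omega, hg⟩,
      isWord_cons.2 ⟨⟨F.one_mem, by omega, by omega⟩, isWord_nil⟩⟩
  have hw₁ : wordProd g [(1, 1), (1, orderOf g - 1)] = 1 := by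
    simp [← pow_succ', Nat.sub_add_cancel hg.le]
  obtain ⟨l', hl', hprod, -⟩ := exists_word_inv_mul hl hw (List.cons_ne_nil _ _)
  exact ⟨l', hl', by rw [hprod, hw₁, mul_one]⟩

lemma exists_word_of_closure_eq_top (hg : 1 < orderOf g)
    (hgen : Subgroup.closure ((F : Set H) ∪ {g}) = ⊤) (h : H) :
    ∃ l, IsWord F g l ∧ wordProd g l = h := by
  induction (hgen ▸ Subgroup.mem_top h : h ∈ Subgroup.closure _) using Subgroup.closure_induction
    with
  | mem x hx =>
    rcases hx with hx | rfl
    · refine ⟨[(x, 1), (1, orderOf g - 1)], isWord_cons.2 ⟨⟨hx, by omega, hg⟩,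
        isWord_cons.2 ⟨⟨F.one_mem, by omega, by omega⟩, isWord_nil⟩⟩, ?_⟩
      simp [mul_assoc, ← pow_succ', Nat.sub_add_cancel hg.le]
    · exact ⟨[(1, 1)], isWord_cons.2 ⟨⟨F.one_mem, by omega, hg⟩, isWord_nil⟩, by simp⟩
  | one => exact ⟨[], isWord_nil, rfl⟩
  | mul x y _ _ hx hy =>
    obtain ⟨l₁, hl₁, rfl⟩ := hx
    obtain ⟨l₂, hl₂, rfl⟩ := hy
    exact ⟨l₁ ++ l₂, hl₁.append hl₂, wordProd_append l₁ l₂⟩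
  | inv x _ hx =>
    obtain ⟨l, hl, rfl⟩ := hx
    exact exists_word_inv hg hl

end Words

section RepLength

variable {H : Type*} [Group H] {F : Subgroup H} {g : H}
  (hword : ∀ h : H, ∃ l, IsWord F g l ∧ wordProd g l = h)

include hword

lemma repLength_mul_le (x y : H) : repLength F g (x * y) ≤ repLength F g x + repLength F g y := by
  obtain ⟨l₁, hl₁, rfl, hlen₁⟩ := exists_word_length_eq_repLength (hword x)
  obtain ⟨l₂, hl₂, rfl, hlen₂⟩ := exists_word_length_eq_repLength (hword y)
  simpa [hlen₁, hlen₂] using repLength_wordProd_le (hl₁.append hl₂)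

lemma repLength_inv_mul_le {x y : H} (hy : repLength F g y ≠ 0) :
    repLength F g (x⁻¹ * y) ≤ repLength F g x + repLength F g y := by
  obtain ⟨l, hl, rfl, hlen⟩ := exists_word_length_eq_repLength (hword x)
  obtain ⟨w, hw, rfl, hwlen⟩ := exists_word_length_eq_repLength (hword y)
  obtain ⟨l', hl', hprod, hlen'⟩ :=
    exists_word_inv_mul hl hw (List.ne_nil_of_length_pos (by omega))
  rw [← hprod, ← hlen, ← hwlen, ← hlen']
  exact repLength_wordProd_le hl'

lemma finite_setOf_repLength_le (hF : (F : Set H).Finite) (n : ℕ) :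
    {h | repLength F g h ≤ n}.Finite := by
  let S := (F : Set H) ×ˢ Iio (orderOf g)
  have : Finite S := (hF.prod (finite_Iio _)).to_subtype
  refine ((List.finite_length_le S n).image fun l => wordProd g (l.map (↑))).subset
    fun h hh => ?_
  obtain ⟨l, hl, rfl, hlen⟩ := exists_word_length_eq_repLength (hword h)
  lift l to List S using fun p hp => ⟨(hl p hp).1, (hl p hp).2.2⟩
  exact ⟨l, by simpa using hlen.trans_le hh, rfl⟩

end RepLength

lemma one_lt_orderOf_of_closure_eq_top {H : Type*} [Group H] [Infinite H] {F : Subgroup H}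
    (hF : (F : Set H).Finite) {g : H} (hg : IsOfFinOrder g)
    (hgen : Subgroup.closure ((F : Set H) ∪ {g}) = ⊤) : 1 < orderOf g := by
  refine lt_of_le_of_ne hg.orderOf_pos fun h1 => ?_
  obtain rfl : g = 1 := orderOf_eq_one_iff.1 h1.symm
  rw [Subgroup.closure_union, Subgroup.closure_eq, Subgroup.closure_singleton_one, sup_bot_eq]
    at hgen
  exact infinite_univ (hgen ▸ hF : ((⊤ : Subgroup H) : Set H).Finite)

lemma lenClasses_eq_kerSublevel {H : Type*} [Group H] (F : Subgroup H) (g : H) :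
    lenClasses F g = kerSublevel (repLength F g) := rfl

theorem stmt6 (H : Type*) [Group H] [Infinite H] (F : Subgroup H) (hF : (F : Set H).Finite)
    (g : H) (hg : IsOfFinOrder g)
    (hgen : Subgroup.closure ((F : Set H) ∪ {g}) = ⊤) :
    WeaklyAmenable H ∧
    (∀ C : Quotient (lenSetoid F g), {h : H | Quotient.mk (lenSetoid F g) h = C}.Finite) ∧
    AppropriateRel (lenSetoid F g) ∧
    (∀ h : H, classBound (lenSetoid F g) h (2 * repLength F g h + 2)) ∧
    (∀ n, (lenClasses F g n).Finite) ∧ Monotone (lenClasses F g) ∧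
    (⋃ n, lenClasses F g n) = Set.univ ∧
    (∀ k : H, Filter.Tendsto (fun n =>
      (({C | C ∈ lenClasses F g n ∧ ∀ h : H, Quotient.mk (lenSetoid F g) h = C →
          Quotient.mk (lenSetoid F g) (k * h) ∈ lenClasses F g n}.ncard : ℝ)) /
        ((lenClasses F g n).ncard : ℝ)) Filter.atTop (nhds 1)) := by
  have hword := exists_word_of_closure_eq_top (one_lt_orderOf_of_closure_eq_top hF hg hgen) hgen
  have hball := finite_setOf_repLength_le hword hF
  have hmul := repLength_mul_le hword
  have : Infinite (Quotient (Setoid.ker (repLength F g))) := infinite_quotient_ker hball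
  have hbound := classBound_ker hmul fun _ _ => repLength_inv_mul_le hword
  have happ : AppropriateRel (lenSetoid F g) := ⟨this, fun k => ⟨_, hbound k⟩⟩
  have htend := tendsto_ncard_kerSublevel_translate hmul
  rw [lenClasses_eq_kerSublevel]
  exact ⟨weaklyAmenable_of_appropriateRel happ _ (kerSublevel_finite _) (kerSublevel_mono _)
      (iUnion_kerSublevel _) htend,
    finite_setOf_mk_eq_of_finite_sublevel hball, happ, hbound, kerSublevel_finite _,
    kerSublevel_mono _, iUnion_kerSublevel _, htend⟩
end

section
/- If G is a finite directed graph with uncountably many infinite directed paths, then G contains a double loop, i.e., a directed subgraph which is the union of two directed cycles whose vertex sets C₁ and C₂ satisfy C₁ ∩ C₂ ≠ ∅ and C₁ ≠ C₂. -/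
open Filter Set

/-- A directed cycle in the directed graph `(V, E)` with vertex set `C`. -/
def IsDirCycle {V : Type*} (E : V → V → Prop) (C : Set V) : Prop :=
  ∃ m : ℕ, 0 < m ∧ ∃ c : ZMod m → V, Function.Injective c ∧ Set.range c = C ∧
    ∀ i : ZMod m, E (c i) (c (i + 1))

/-- A double loop: two directed cycles with intersecting but distinct vertex sets. -/
def HasDoubleLoop {V : Type*} (E : V → V → Prop) : Prop :=
  ∃ C₁ C₂ : Set V, IsDirCycle E C₁ ∧ IsDirCycle E C₂ ∧ (C₁ ∩ C₂).Nonempty ∧ C₁ ≠ C₂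

/-- A vertex is good to the right if uncountably many infinite directed paths start at it. -/
def GoodRight {V : Type*} (E : V → V → Prop) (u : V) : Prop :=
  ¬ {p : ℕ → V | p 0 = u ∧ ∀ n, E (p n) (p (n + 1))}.Countable

/-- A vertex is good to the left if uncountably many infinite directed paths end at it. -/
def GoodLeft {V : Type*} (E : V → V → Prop) (u : V) : Prop :=
  ¬ {p : ℕ → V | p 0 = u ∧ ∀ n, E (p (n + 1)) (p n)}.Countable

/-! Without double loops, every vertex `u` has at most one out-neighbour from which `u` can be
reached again. An infinite path eventually only visits vertices it returns to, so from some time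
on each of its steps goes to that distinguished neighbour: the path is eventually an orbit of a
fixed self-map of the finite vertex set, and there are only countably many such sequences. -/

section

variable {V : Type*} {E : V → V → Prop}

def HasWalkOfLength (E : V → V → Prop) (n : ℕ) (x y : V) : Prop :=
  ∃ w : ℕ → V, w 0 = x ∧ w n = y ∧ ∀ i < n, E (w i) (w (i + 1))

lemma HasWalkOfLength.exists_minimal {x y : V} (h : ∃ n, HasWalkOfLength E n x y) :
    ∃ n, HasWalkOfLength E n x y ∧ ∀ k < n, ¬ HasWalkOfLength E k x y := by
  classical
  exact ⟨Nat.find h, Nat.find_spec h, fun _ => Nat.find_min h⟩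

lemma hasWalkOfLength_shortcut {n i j : ℕ} {w : ℕ → V} (hE : ∀ t < n, E (w t) (w (t + 1)))
    (hij : i < j) (hjn : j ≤ n) (hw : w i = w j) :
    HasWalkOfLength E (n - (j - i)) (w 0) (w n) := by
  refine ⟨fun t => if t ≤ i then w t else w (t + (j - i)), by simp, ?_, fun t ht => ?_⟩
  · by_cases hn : n - (j - i) ≤ i
    · simp only [hn, if_true]
      rw [show n - (j - i) = i by omega, hw, show j = n by omega]
    · simp only [hn, if_false]
      rw [Nat.sub_add_cancel (by omega)]
  · rcases lt_trichotomy t i with hti | rfl | hti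
    · simpa [hti.le, Nat.succ_le_of_lt hti] using hE t (by omega)
    · simpa [hw, show t + 1 + (j - t) = j + 1 by omega] using hE j (by omega)
    · simpa [hti.not_ge, show ¬ t + 1 ≤ i by omega,
        show t + 1 + (j - i) = t + (j - i) + 1 by omega]
        using hE (t + (j - i)) (by omega)

lemma injOn_of_minimal_walk {n : ℕ} {w : ℕ → V} (hE : ∀ t < n, E (w t) (w (t + 1)))
    (hmin : ∀ k < n, ¬ HasWalkOfLength E k (w 0) (w n)) : InjOn w (Iic n) := by
  intro i (hi : i ≤ n) j (hj : j ≤ n) hw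
  by_contra hne
  rcases lt_or_gt_of_ne hne with hij | hij
  · exact hmin _ (by omega) (hasWalkOfLength_shortcut hE hij hj hw)
  · exact hmin _ (by omega) (hasWalkOfLength_shortcut hE hij hi hw.symm)

lemma isDirCycle_image_Iic {n : ℕ} {w : ℕ → V} (hinj : InjOn w (Iic n))
    (hE : ∀ t < n, E (w t) (w (t + 1))) (hclose : E (w n) (w 0)) :
    IsDirCycle E (w '' Iic n) := by
  have hval (i : ZMod (n + 1)) : i.val ∈ Iic n := Nat.le_of_lt_succ (ZMod.val_lt i)
  refine ⟨n + 1, n.succ_pos, fun i => w i.val, fun i j hij => ?_, ?_, fun i => ?_⟩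
  · exact ZMod.val_injective _ (hinj (hval i) (hval j) hij)
  · ext v
    constructor
    · rintro ⟨i, rfl⟩
      exact ⟨i.val, hval i, rfl⟩
    · rintro ⟨j, hj, rfl⟩
      exact ⟨j, congrArg w (ZMod.val_natCast_of_lt (Nat.lt_succ_of_le hj))⟩
  · have hsucc : (i + 1).val = (i.val + 1) % (n + 1) := by
      rw [← ZMod.val_natCast, Nat.cast_add, ZMod.natCast_zmod_val, Nat.cast_one]
    simp only [hsucc]
    rcases (mem_Iic.mp (hval i)).lt_or_eq with hi | hi
    · rw [Nat.mod_eq_of_lt (by omega)]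
      exact hE _ hi
    · rw [hi, Nat.mod_self]
      exact hclose

lemma exists_isDirCycle_of_minimal_walk {n : ℕ} {u x : V} (hux : E u x)
    (hxu : HasWalkOfLength E n x u) (hmin : ∀ k < n, ¬ HasWalkOfLength E k x u) :
    ∃ C, IsDirCycle E C ∧ u ∈ C ∧ x ∈ C ∧
      ∀ y ∈ C, y ≠ x → ∃ k < n, HasWalkOfLength E k y u := by
  obtain ⟨w, rfl, rfl, hE⟩ := hxu
  refine ⟨w '' Iic n, isDirCycle_image_Iic (injOn_of_minimal_walk hE hmin) hE hux,
    ⟨n, mem_Iic.mpr le_rfl, rfl⟩, ⟨0, mem_Iic.mpr n.zero_le, rfl⟩, ?_⟩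
  rintro _ ⟨j, hj : j ≤ n, rfl⟩ hne
  have hj0 : j ≠ 0 := by rintro rfl; exact hne rfl
  refine ⟨n - j, by omega, fun i => w (j + i), rfl, by simp only [Nat.add_sub_cancel' hj], ?_⟩
  exact fun i hi => hE (j + i) (by omega)

/-- The cycles through `u` along shortest return walks from `x` and from `y` must coincide, so each
of `x`, `y` lies on the other's shortest return walk: each return distance would be strictly
smaller than the other. -/
lemma eq_of_adj_of_hasWalk (hndl : ¬ HasDoubleLoop E) {u x y : V} (hux : E u x) (huy : E u y)
    (hxu : ∃ n, HasWalkOfLength E n x u) (hyu : ∃ n, HasWalkOfLength E n y u) : x = y := by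
  by_contra hne
  obtain ⟨m, hm, hmin_x⟩ := HasWalkOfLength.exists_minimal hxu
  obtain ⟨n, hn, hmin_y⟩ := HasWalkOfLength.exists_minimal hyu
  obtain ⟨Cx, hCx, huCx, hxCx, hCx_short⟩ := exists_isDirCycle_of_minimal_walk hux hm hmin_x
  obtain ⟨Cy, hCy, huCy, hyCy, hCy_short⟩ := exists_isDirCycle_of_minimal_walk huy hn hmin_y
  have hC : Cx = Cy := by_contra fun hC => hndl ⟨Cx, Cy, hCx, hCy, ⟨u, huCx, huCy⟩, hC⟩
  obtain ⟨k, hkm, hk⟩ := hCx_short y (hC ▸ hyCy) (Ne.symm hne)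
  obtain ⟨l, hln, hl⟩ := hCy_short x (hC ▸ hxCx) hne
  have := not_lt.mp fun h => hmin_y k h hk
  have := not_lt.mp fun h => hmin_x l h hl
  omega

lemma exists_forall_adj_hasWalk_eq (hndl : ¬ HasDoubleLoop E) :
    ∃ f : V → V, ∀ u x, E u x → (∃ n, HasWalkOfLength E n x u) → x = f u := by
  have (u : V) : ∃ y, ∀ x, E u x → (∃ n, HasWalkOfLength E n x u) → x = y := by
    by_cases h : ∃ x, E u x ∧ ∃ n, HasWalkOfLength E n x u
    · obtain ⟨y, huy, hyu⟩ := h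
      exact ⟨y, fun x hux hxu => eq_of_adj_of_hasWalk hndl hux huy hxu hyu⟩
    · exact ⟨u, fun x hux hxu => (h ⟨x, hux, hxu⟩).elim⟩
  choose f hf using this
  exact ⟨f, hf⟩

lemma eventually_exists_gt_eq [Finite V] (p : ℕ → V) :
    ∀ᶠ n in atTop, ∃ m > n, p m = p n := by
  have (v : V) : ∀ᶠ n in atTop, p n = v → ∃ᶠ m in atTop, p m = v := by
    by_cases hv : ∃ᶠ m in atTop, p m = v
    · exact Eventually.of_forall fun _ _ => hv
    · exact (not_frequently.mp hv).mono fun n hn h => absurd h hn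
  filter_upwards [eventually_all.mpr this] with n hn
  obtain ⟨m, hm, hpm⟩ := frequently_atTop.mp (hn (p n) rfl) (n + 1)
  exact ⟨m, hm, hpm⟩

lemma exists_eventually_succ_eq [Finite V] (hndl : ¬ HasDoubleLoop E) {p : ℕ → V}
    (hp : ∀ n, E (p n) (p (n + 1))) :
    ∃ f : V → V, ∀ᶠ n in atTop, p (n + 1) = f (p n) := by
  obtain ⟨f, hf⟩ := exists_forall_adj_hasWalk_eq hndl
  refine ⟨f, (eventually_exists_gt_eq p).mono fun n ⟨m, hnm, hpm⟩ => hf _ _ (hp n) ?_⟩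
  refine ⟨m - (n + 1), fun i => p (n + 1 + i), rfl, ?_, fun i _ => hp (n + 1 + i)⟩
  simp only [Nat.add_sub_cancel' hnm, hpm]

lemma countable_setOf_eventually_succ_eq [Finite V] :
    {p : ℕ → V | ∃ f : V → V, ∀ᶠ n in atTop, p (n + 1) = f (p n)}.Countable := by
  have hS : {p : ℕ → V | ∃ f : V → V, ∀ᶠ n in atTop, p (n + 1) = f (p n)} =
      ⋃ (f : V → V) (N : ℕ), {p | ∀ n ≥ N, p (n + 1) = f (p n)} := by
    ext p
    simp [eventually_atTop]
  rw [hS]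
  refine countable_iUnion fun f => countable_iUnion fun N => Set.Finite.countable ?_
  refine Set.Finite.of_finite_image (f := fun p (i : Fin (N + 1)) => p i) (toFinite _) ?_
  intro p hp q hq hpq
  funext n
  induction n with
  | zero => exact congrFun hpq 0
  | succ n ih =>
    by_cases hn : n + 1 ≤ N
    · exact congrFun hpq ⟨n + 1, by omega⟩
    · rw [hp n (by omega), hq n (by omega), ih]

end

theorem stmt12 (V : Type*) [Fintype V] (E : V → V → Prop)
    (h : ¬ {p : ℕ → V | ∀ n, E (p n) (p (n + 1))}.Countable) :
    HasDoubleLoop E := by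
  by_contra hndl
  exact h <| countable_setOf_eventually_succ_eq.mono fun p hp => exists_eventually_succ_eq hndl hp
end

section
/- Every vertex of a double loop in a finite directed graph is good to the right and good to the left. -/
open Filter Set

/-!
Let `v` be a common vertex of the two cycles. Walking around either cycle from `v` gives two
periodic paths from `v` with a common period `M`, both back at `v` at every multiple of `M`, and
they differ because the cycles have different vertex sets. Choosing independently on each block
`[k M, (k + 1) M)` which of the two to follow encodes every subset of `ℕ` injectively as a path
from `v`, so `v` is good to the right. Every vertex of `C₁ ∪ C₂` reaches `v` along its cycle, and
prepending a finite walk preserves goodness to the right. Reversing all edges maps cycles to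
cycles and exchanges the two notions of goodness.
-/

open Function Relation

lemma not_countable_set_nat : ¬ Countable (Set ℕ) := fun _ ↦
  let ⟨e, he⟩ := Countable.exists_injective_nat (Set ℕ)
  cantor_injective e he

section Paths

variable {V : Type*} {E : V → V → Prop}

lemma reflTransGen_of_path {p : ℕ → V} (hp : ∀ n, E (p n) (p (n + 1))) :
    ∀ n, ReflTransGen E (p 0) (p n)
  | 0 => .refl
  | n + 1 => (reflTransGen_of_path hp n).tail (hp n)

lemma goodRight_of_injective {u : V} (P : Set ℕ → ℕ → V) (hP : Injective P)
    (hpath : ∀ s, P s 0 = u ∧ ∀ n, E (P s n) (P s (n + 1))) : GoodRight E u := fun hcount ↦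
  not_countable_set_nat <| Set.countable_univ_iff.mp <|
    (hcount.preimage hP).mono fun s _ ↦ hpath s

lemma GoodRight.of_adj {u v : V} (hv : GoodRight E v) (huv : E u v) : GoodRight E u := by
  refine fun hcount ↦ hv <| (hcount.preimage (Stream'.cons_injective_right u)).mono ?_
  rintro p ⟨rfl, hp⟩
  exact ⟨rfl, fun | 0 => huv | n + 1 => hp n⟩

lemma GoodRight.of_reflTransGen {u v : V} (hv : GoodRight E v) (huv : ReflTransGen E u v) :
    GoodRight E u := by
  induction huv using ReflTransGen.head_induction_on with
  | refl => exact hv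
  | head hab _ ih => exact ih.of_adj hab

open Classical in
noncomputable def blockPath (w₀ w₁ : ℕ → V) (M : ℕ) (s : Set ℕ) (n : ℕ) : V :=
  if n / M ∈ s then w₁ n else w₀ n

variable {w₀ w₁ : ℕ → V} {M : ℕ}

lemma blockPath_isPath (h₀ : ∀ n, E (w₀ n) (w₀ (n + 1)))
    (h₁ : ∀ n, E (w₁ n) (w₁ (n + 1))) (hper₀ : Periodic w₀ M) (hper₁ : Periodic w₁ M)
    (hstart : w₀ 0 = w₁ 0) (s : Set ℕ) (n : ℕ) :
    E (blockPath w₀ w₁ M s n) (blockPath w₀ w₁ M s (n + 1)) := by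
  unfold blockPath
  by_cases hdvd : M ∣ n + 1
  · obtain ⟨k, hk⟩ := hdvd
    have hzero : ∀ w : ℕ → V, Periodic w M → w (n + 1) = w 0 := fun w hw ↦ by
      simpa [hk, mul_comm] using hw.nat_mul_eq k
    have hmeet : w₀ (n + 1) = w₁ (n + 1) := by rw [hzero w₀ hper₀, hzero w₁ hper₁, hstart]
    split_ifs
    exacts [h₁ n, hmeet ▸ h₁ n, hmeet ▸ h₀ n, h₀ n]
  · rw [Nat.succ_div, if_neg hdvd, add_zero]
    split_ifs
    exacts [h₁ n, h₀ n]

lemma blockPath_injective (hM : 0 < M) (hper₀ : Periodic w₀ M) (hper₁ : Periodic w₁ M)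
    (hne : w₀ ≠ w₁) : Injective (blockPath w₀ w₁ M) := by
  have hsubset : ∀ s t, blockPath w₀ w₁ M s = blockPath w₀ w₁ M t → s ⊆ t := by
    intro s t hst k hks
    by_contra hkt
    refine hne (funext fun n ↦ ?_)
    have hblock : ∀ w : ℕ → V, Periodic w M → w (n % M + k * M) = w n := fun w hw ↦ by
      rw [← hw.map_mod_nat, Nat.add_mul_mod_self_right, Nat.mod_mod, hw.map_mod_nat]
    have hk : (n % M + k * M) / M = k := by
      rw [Nat.add_mul_div_right _ _ hM, Nat.mod_div_self, zero_add]
    have := congrFun hst (n % M + k * M)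
    simp only [blockPath, hk, hks, hkt, if_true, if_false, hblock w₀ hper₀,
      hblock w₁ hper₁] at this
    exact this.symm
  exact fun s t hst ↦ (hsubset s t hst).antisymm (hsubset t s hst.symm)

lemma goodRight_of_periodic_paths (hM : 0 < M) (h₀ : ∀ n, E (w₀ n) (w₀ (n + 1)))
    (h₁ : ∀ n, E (w₁ n) (w₁ (n + 1))) (hper₀ : Periodic w₀ M) (hper₁ : Periodic w₁ M)
    (hstart : w₀ 0 = w₁ 0) (hne : w₀ ≠ w₁) : GoodRight E (w₀ 0) :=
  goodRight_of_injective _ (blockPath_injective hM hper₀ hper₁ hne) fun s ↦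
    ⟨by simp [blockPath, hstart], blockPath_isPath h₀ h₁ hper₀ hper₁ hstart s⟩

end Paths

namespace IsDirCycle

variable {V : Type*} {E : V → V → Prop} {C : Set V}

lemma exists_periodic_path (h : IsDirCycle E C) {u : V} (hu : u ∈ C) :
    ∃ m, 0 < m ∧ ∃ w : ℕ → V,
      w 0 = u ∧ (∀ n, E (w n) (w (n + 1))) ∧ Periodic w m ∧ Set.range w = C := by
  obtain ⟨m, hm, c, -, rfl, hedge⟩ := h
  have : NeZero m := ⟨hm.ne'⟩
  obtain ⟨i, rfl⟩ := hu
  refine ⟨m, hm, fun n ↦ c (i + n), by simp, fun n ↦ ?_, fun n ↦ ?_, ?_⟩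
  · simpa [add_assoc] using hedge (i + n)
  · simp
  · refine (Set.range_subset_range_iff_exists_comp.mpr ⟨_, rfl⟩).antisymm ?_
    rintro _ ⟨j, rfl⟩
    exact ⟨(j - i).val, by simp⟩

lemma reflTransGen (h : IsDirCycle E C) {u v : V} (hu : u ∈ C) (hv : v ∈ C) :
    ReflTransGen E u v := by
  obtain ⟨-, -, w, rfl, hw, -, hrange⟩ := h.exists_periodic_path hu
  obtain ⟨n, rfl⟩ := hrange ▸ hv
  exact reflTransGen_of_path hw n

lemma swap (h : IsDirCycle E C) : IsDirCycle (swap E) C := by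
  obtain ⟨m, hm, c, hinj, rfl, hedge⟩ := h
  refine ⟨m, hm, c ∘ Neg.neg, hinj.comp neg_injective, neg_surjective.range_comp c, fun i ↦ ?_⟩
  simpa using hedge (-(i + 1))

end IsDirCycle

lemma goodRight_of_cycles {V : Type*} {E : V → V → Prop} {C₁ C₂ : Set V}
    (h₁ : IsDirCycle E C₁) (h₂ : IsDirCycle E C₂) (hmeet : (C₁ ∩ C₂).Nonempty) (hne : C₁ ≠ C₂) :
    ∀ u ∈ C₁ ∪ C₂, GoodRight E u := by
  obtain ⟨v, hv₁, hv₂⟩ := hmeet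
  obtain ⟨m₁, hm₁, w₁, hw₁0, hw₁, hper₁, hrange₁⟩ := h₁.exists_periodic_path hv₁
  obtain ⟨m₂, hm₂, w₂, hw₂0, hw₂, hper₂, hrange₂⟩ := h₂.exists_periodic_path hv₂
  have hv : GoodRight E v := hw₁0 ▸ goodRight_of_periodic_paths (Nat.mul_pos hm₂ hm₁) hw₁ hw₂
    (by simpa using hper₁.nat_mul m₂) (by simpa [mul_comm] using hper₂.nat_mul m₁)
    (hw₁0.trans hw₂0.symm) (fun h ↦ hne (hrange₁ ▸ hrange₂ ▸ congrArg Set.range h))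
  rintro u (hu | hu)
  exacts [hv.of_reflTransGen (h₁.reflTransGen hu hv₁), hv.of_reflTransGen (h₂.reflTransGen hu hv₂)]

theorem stmt14_general (V : Type*) (E : V → V → Prop) (C₁ C₂ : Set V)
    (h₁ : IsDirCycle E C₁) (h₂ : IsDirCycle E C₂)
    (hmeet : (C₁ ∩ C₂).Nonempty) (hne : C₁ ≠ C₂) :
    ∀ u ∈ C₁ ∪ C₂, GoodRight E u ∧ GoodLeft E u := fun u hu ↦
  ⟨goodRight_of_cycles h₁ h₂ hmeet hne u hu,
    goodRight_of_cycles (E := swap E) h₁.swap h₂.swap hmeet hne u hu⟩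

theorem stmt14 (V : Type*) [Fintype V] (E : V → V → Prop) (C₁ C₂ : Set V)
    (h₁ : IsDirCycle E C₁) (h₂ : IsDirCycle E C₂)
    (hmeet : (C₁ ∩ C₂).Nonempty) (hne : C₁ ≠ C₂) :
    ∀ u ∈ C₁ ∪ C₂, GoodRight E u ∧ GoodLeft E u :=
  stmt14_general V E C₁ C₂ h₁ h₂ hmeet hne
end
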